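/- arXiv:2401.14160 — 2 statements merged into one kernel-verified Lean document; each statement's English description precedes it below -/
import Mathlib

section
/- Let U be a finite set, p a probability mass function on U with p(u) > 0 for all u, and {U_s : s ∈ S} a partition of U; write s(u) for the class index of u and P(U_s) = Σ_{u∈U_s} p(u). For ε > 0, n ≥ 1, and a semantic sequence ũ^n = (s_1,...,s_n) ∈ S^n, define the synonymous typical set B_ε^(n)(ũ^n) as the set of u^n = (u_1,...,u_n) ∈ U^n with s(u_k) = s_k for all k such that | −(1/n) Σ_k log₂ p(u_k) − H(U) | < ε, | −(1/n) Σ_k log₂ P(U_{s_k}) − H_s(Ũ) | < ε, and | −(1/n) Σ_k log₂ (p(u_k)/P(U_{s_k})) − (H(U) − H_s(Ũ)) | < ε. Then for every n and every ũ^n, |B_ε^(n)(ũ^n)| ≤ 2^{n(H(U) − H_s(Ũ) + ε)}. -/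
open Finset
open scoped Classical

/-- Probability of the partition class indexed by `s` under the class-index map `c`:
`P(U_s) = Σ_{u ∈ U_s} p u`. -/
noncomputable def Pclass {U S : Type*} [Fintype U] (p : U → ℝ) (c : U → S) (s : S) : ℝ :=
  ∑ u : U, if c u = s then p u else 0

/-- Semantic entropy `H_s(Ũ) = −Σ_s P(U_s) log₂ P(U_s)` of the partition of `U`
induced by the class-index map `c : U → S`. -/
noncomputable def semEntropy {U S : Type*} [Fintype U] [Fintype S]
    (p : U → ℝ) (c : U → S) : ℝ :=
  -∑ s : S, Pclass p c s * Real.logb 2 (Pclass p c s)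

/-- Shannon entropy `H(U) = −Σ_u p(u) log₂ p(u)`. -/
noncomputable def shEntropy {U : Type*} [Fintype U] (p : U → ℝ) : ℝ :=
  -∑ u : U, p u * Real.logb 2 (p u)

/-- The synonymous typical set `B_ε^(n)(ũ^n)` associated with a semantic sequence
`ũ^n = (s_1,…,s_n) ∈ S^n`: syntactic sequences `u^n ∈ U^n` consistent with `ũ^n`
(`s(u_k) = s_k` for all `k`) satisfying the three `ε`-typicality conditions on
`−(1/n) Σ_k log₂ p(u_k)`, `−(1/n) Σ_k log₂ P(U_{s_k})`, and
`−(1/n) Σ_k log₂ (p(u_k)/P(U_{s_k}))`. -/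
noncomputable def synTypicalSet {U S : Type*} [Fintype U] [Fintype S]
    (p : U → ℝ) (c : U → S) (ε : ℝ) (n : ℕ) (us : Fin n → S) : Finset (Fin n → U) :=
  Finset.univ.filter (fun x : Fin n → U =>
    (∀ k, c (x k) = us k) ∧
    |(-(1 / (n : ℝ)) * ∑ k : Fin n, Real.logb 2 (p (x k))) - shEntropy p| < ε ∧
    |(-(1 / (n : ℝ)) * ∑ k : Fin n, Real.logb 2 (Pclass p c (us k))) - semEntropy p c| < ε ∧
    |(-(1 / (n : ℝ)) * ∑ k : Fin n, Real.logb 2 (p (x k) / Pclass p c (us k))) -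
        (shEntropy p - semEntropy p c)| < ε)

/-!
Only the third typicality condition matters: it says that every `u^n ∈ B_ε^(n)(ũ^n)` has
conditional probability `p(ũ^n → u^n) ≥ 2^{-n(H(U) - H_s(Ũ) + ε)}`, while the conditional
probabilities of all sequences consistent with `ũ^n` add up to `∏ₖ P(U_{sₖ}) / P(U_{sₖ}) ≤ 1`.
-/

theorem Finset.card_le_of_inv_le_of_sum_le_one {α : Type*} {s : Finset α} {f : α → ℝ} {a : ℝ}
    (ha : 0 < a) (hf : ∀ x ∈ s, a⁻¹ ≤ f x) (hsum : ∑ x ∈ s, f x ≤ 1) : (s.card : ℝ) ≤ a := by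
  have hmass : (s.card : ℝ) * a⁻¹ ≤ 1 := by
    simpa only [nsmul_eq_mul] using (s.card_nsmul_le_sum f a⁻¹ hf).trans hsum
  rwa [mul_inv_le_iff₀ ha, one_mul] at hmass

theorem neg_mul_le_sum_of_neg_mean_lt {n : ℕ} (f : Fin n → ℝ) {K : ℝ}
    (h : -(1 / (n : ℝ)) * ∑ k, f k < K) : -((n : ℝ) * K) ≤ ∑ k, f k := by
  rcases n.eq_zero_or_pos with rfl | hn
  · simp
  · have hn' : (0 : ℝ) < n := Nat.cast_pos.mpr hn
    have := mul_lt_mul_of_pos_left h hn'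
    rw [← mul_assoc, mul_neg, mul_one_div_cancel hn'.ne'] at this
    linarith

section SynonymousTypicality

variable {U S : Type*} [Fintype U] (p : U → ℝ) (c : U → S)

theorem Pclass_nonneg (hp : ∀ u, 0 ≤ p u) (s : S) : 0 ≤ Pclass p c s :=
  Finset.sum_nonneg fun u _ => by split_ifs <;> simp [hp u]

theorem Pclass_eq_sum_filter (s : S) : Pclass p c s = ∑ u with c u = s, p u :=
  (Finset.sum_filter _ _).symm

theorem le_Pclass_apply (hp : ∀ u, 0 ≤ p u) (u : U) : p u ≤ Pclass p c (c u) := by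
  rw [Pclass_eq_sum_filter]
  exact Finset.single_le_sum (fun v _ => hp v) (by simp)

theorem consistent_of_mem_synTypicalSet [Fintype S] {ε : ℝ} {n : ℕ} {us : Fin n → S}
    {x : Fin n → U} (hx : x ∈ synTypicalSet p c ε n us) : ∀ k, c (x k) = us k :=
  (Finset.mem_filter.mp hx).2.1

/-- The paper's `p(ũ^n → u^n)`. -/
noncomputable def seqCondProb {n : ℕ} (us : Fin n → S) (x : Fin n → U) : ℝ :=
  ∏ k, p (x k) / Pclass p c (us k)

theorem seqCondProb_nonneg (hp : ∀ u, 0 ≤ p u) {n : ℕ} (us : Fin n → S) (x : Fin n → U) :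
    0 ≤ seqCondProb p c us x :=
  Finset.prod_nonneg fun _ _ => div_nonneg (hp _) (Pclass_nonneg p c hp _)

theorem sum_seqCondProb_le_one (hp : ∀ u, 0 ≤ p u) {n : ℕ} (us : Fin n → S)
    {s : Finset (Fin n → U)} (hs : ∀ x ∈ s, ∀ k, c (x k) = us k) :
    ∑ x ∈ s, seqCondProb p c us x ≤ 1 := by
  set consistent := Fintype.piFinset fun k => ({u | c u = us k} : Finset U)
  have hsub : s ⊆ consistent := fun x hx => Fintype.mem_piFinset.mpr fun k => by simp [hs x hx k]
  calc ∑ x ∈ s, seqCondProb p c us x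
      ≤ ∑ x ∈ consistent, seqCondProb p c us x :=
        Finset.sum_le_sum_of_subset_of_nonneg hsub fun x _ _ => seqCondProb_nonneg p c hp us x
    _ = ∏ k, ∑ u with c u = us k, p u / Pclass p c (us k) :=
        (Finset.prod_univ_sum (fun k => ({u | c u = us k} : Finset U))
          fun k u => p u / Pclass p c (us k)).symm
    _ = ∏ k, Pclass p c (us k) / Pclass p c (us k) :=
        Finset.prod_congr rfl fun k _ => by rw [← Finset.sum_div, ← Pclass_eq_sum_filter]
    _ ≤ 1 := Finset.prod_le_one (fun k _ => div_nonneg (Pclass_nonneg p c hp _)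
        (Pclass_nonneg p c hp _)) fun k _ => div_self_le_one _

theorem seqCondProb_eq_rpow_sum_logb (hp : ∀ u, 0 < p u) {n : ℕ} (us : Fin n → S)
    {x : Fin n → U} (hx : ∀ k, c (x k) = us k) :
    seqCondProb p c us x = 2 ^ ∑ k, Real.logb 2 (p (x k) / Pclass p c (us k)) := by
  rw [Real.rpow_sum_of_pos two_pos]
  refine Finset.prod_congr rfl fun k _ => (Real.rpow_logb two_pos (by norm_num) ?_).symm
  rw [← hx k]
  exact div_pos (hp _) ((hp _).trans_le (le_Pclass_apply p c (fun u => (hp u).le) _))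

theorem rpow_neg_le_seqCondProb_of_mem_synTypicalSet [Fintype S] (hp : ∀ u, 0 < p u)
    {ε : ℝ} {n : ℕ} {us : Fin n → S} {x : Fin n → U} (hx : x ∈ synTypicalSet p c ε n us) :
    (2 : ℝ) ^ (-((n : ℝ) * (shEntropy p - semEntropy p c + ε))) ≤ seqCondProb p c us x := by
  obtain ⟨hcons, -, -, hcond⟩ := (Finset.mem_filter.mp hx).2
  rw [seqCondProb_eq_rpow_sum_logb p c hp us hcons]
  refine Real.rpow_le_rpow_of_exponent_le one_le_two (neg_mul_le_sum_of_neg_mean_lt _ ?_)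
  linarith [(abs_lt.mp hcond).2]

end SynonymousTypicality

theorem synTypicalSet_card_upper_bound_general
    {U S : Type*} [Fintype U] [Fintype S]
    (p : U → ℝ) (hp0 : ∀ u, 0 < p u)
    (c : U → S)
    (ε : ℝ) (n : ℕ) (us : Fin n → S) :
    ((synTypicalSet p c ε n us).card : ℝ) ≤
      2 ^ ((n : ℝ) * (shEntropy p - semEntropy p c + ε)) := by
  refine Finset.card_le_of_inv_le_of_sum_le_one (Real.rpow_pos_of_pos two_pos _)
    (fun x hx => ?_) (sum_seqCondProb_le_one p c (fun u => (hp0 u).le) us fun x hx => ?_)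
  · rw [← Real.rpow_neg zero_le_two]
    exact rpow_neg_le_seqCondProb_of_mem_synTypicalSet p c hp0 hx
  · exact consistent_of_mem_synTypicalSet p c hx

/-- Let `p` be a pmf on `U` with `p u > 0` for all `u` and a partition encoded by
a surjective class-index map `c : U → S`.  For every `ε > 0`, every `n ≥ 1`, and every semantic
sequence `ũ^n ∈ S^n`, the synonymous typical set satisfies
`|B_ε^(n)(ũ^n)| ≤ 2^{n (H(U) − H_s(Ũ) + ε)}`. -/
theorem synTypicalSet_card_upper_bound
    {U S : Type*} [Fintype U] [Fintype S]
    (p : U → ℝ) (hp0 : ∀ u, 0 < p u) (hp1 : ∑ u : U, p u = 1)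
    (c : U → S) (hc : Function.Surjective c)
    (ε : ℝ) (hε : 0 < ε) (n : ℕ) (hn : 1 ≤ n) (us : Fin n → S) :
    ((synTypicalSet p c ε n us).card : ℝ) ≤
      2 ^ ((n : ℝ) * (shEntropy p - semEntropy p c + ε)) :=
  synTypicalSet_card_upper_bound_general p hp0 c ε n us
end

section
/- (Semantic channel coding theorem, converse part) Let W be a discrete memoryless channel from a finite set X to a finite set Y, and fix partitions {X_s : s ∈ S} of X and {Y_t : t ∈ T} of Y, with semantic capacity C_s = sup over input probability mass functions p of I^s(X̃;Ỹ). If R > C_s, then for any sequence of codes with message sets M_n, |M_n| ≥ 2^{nR}, encoders φ_n : M_n → X^n, and decoders ψ_n : Y^n → M_n, the average error probability (1/|M_n|) Σ_{m∈M_n} Pr( ψ_n(Y^n) ≠ m | X^n = φ_n(m) ) tends to 1 as n → ∞, where Pr(Y^n = y^n | X^n = x^n) = Π_{k=1}^n W(y_k|x_k). -/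
open Finset
open scoped Classical

/-- Probability of a product class `P(U_s × V_t) = Σ_{u∈U_s} Σ_{v∈V_t} p(u,v)`. -/
noncomputable def PjointClass {U V S T : Type*} [Fintype U] [Fintype V]
    (p : U → V → ℝ) (cU : U → S) (cV : V → T) (s : S) (t : T) : ℝ :=
  ∑ u : U, ∑ v : V, if cU u = s ∧ cV v = t then p u v else 0

/-- Semantic joint entropy `H_s(Ũ,Ṽ) = −Σ_{s,t} P(U_s × V_t) log₂ P(U_s × V_t)`. -/
noncomputable def semJointEntropy {U V S T : Type*} [Fintype U] [Fintype V] [Fintype S] [Fintype T]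
    (p : U → V → ℝ) (cU : U → S) (cV : V → T) : ℝ :=
  -∑ s : S, ∑ t : T, PjointClass p cU cV s t * Real.logb 2 (PjointClass p cU cV s t)

/-- Shannon joint entropy `H(U,V) = −Σ_{u,v} p(u,v) log₂ p(u,v)`. -/
noncomputable def shJointEntropy {U V : Type*} [Fintype U] [Fintype V] (p : U → V → ℝ) : ℝ :=
  -∑ u : U, ∑ v : V, p u v * Real.logb 2 (p u v)

/-- Marginal `p(u) = Σ_v p(u,v)`. -/
noncomputable def margU {U V : Type*} [Fintype V] (p : U → V → ℝ) (u : U) : ℝ :=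
  ∑ v : V, p u v

/-- Marginal `p(v) = Σ_u p(u,v)`. -/
noncomputable def margV {U V : Type*} [Fintype U] (p : U → V → ℝ) (v : V) : ℝ :=
  ∑ u : U, p u v

/-- `p(U_s, v) = Σ_{u ∈ U_s} p(u,v)`. -/
noncomputable def PclassU {U V S : Type*} [Fintype U]
    (p : U → V → ℝ) (cU : U → S) (s : S) (v : V) : ℝ :=
  ∑ u : U, if cU u = s then p u v else 0

/-- `p(u, V_t) = Σ_{v ∈ V_t} p(u,v)`. -/
noncomputable def PclassV {U V T : Type*} [Fintype V]
    (p : U → V → ℝ) (cV : V → T) (u : U) (t : T) : ℝ :=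
  ∑ v : V, if cV v = t then p u v else 0

/-- Semantic conditional entropy
`H_s(Ũ|V) = −Σ_v Σ_s p(U_s, v) log₂ (p(U_s, v)/p(v))` (terms with `p(v) = 0` vanish). -/
noncomputable def semCondEntropyU {U V S : Type*} [Fintype U] [Fintype V] [Fintype S]
    (p : U → V → ℝ) (cU : U → S) : ℝ :=
  -∑ v : V, ∑ s : S, PclassU p cU s v * Real.logb 2 (PclassU p cU s v / margV p v)

/-- Semantic conditional entropy
`H_s(Ṽ|U) = −Σ_u Σ_t p(u, V_t) log₂ (p(u, V_t)/p(u))` (terms with `p(u) = 0` vanish). -/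
noncomputable def semCondEntropyV {U V T : Type*} [Fintype U] [Fintype V] [Fintype T]
    (p : U → V → ℝ) (cV : V → T) : ℝ :=
  -∑ u : U, ∑ t : T, PclassV p cV u t * Real.logb 2 (PclassV p cV u t / margU p u)

/-- Shannon conditional entropy `H(U|V) = −Σ_{u,v} p(u,v) log₂ (p(u,v)/p(v))`
(terms with `p(v) = 0` vanish). -/
noncomputable def shCondEntropyU {U V : Type*} [Fintype U] [Fintype V] (p : U → V → ℝ) : ℝ :=
  -∑ u : U, ∑ v : V, p u v * Real.logb 2 (p u v / margV p v)

/-- Mutual information `I(U;V) = H(U) + H(V) − H(U,V)`. -/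
noncomputable def mutualInfo {U V : Type*} [Fintype U] [Fintype V] (p : U → V → ℝ) : ℝ :=
  shEntropy (margU p) + shEntropy (margV p) - shJointEntropy p

/-- Down semantic mutual information `I_s(Ũ;Ṽ) = H_s(Ũ) + H_s(Ṽ) − H(U,V)`. -/
noncomputable def downSMI {U V S T : Type*} [Fintype U] [Fintype V] [Fintype S] [Fintype T]
    (p : U → V → ℝ) (cU : U → S) (cV : V → T) : ℝ :=
  semEntropy (margU p) cU + semEntropy (margV p) cV - shJointEntropy p

/-- Up semantic mutual information `I^s(Ũ;Ṽ) = H(U) + H(V) − H_s(Ũ,Ṽ)`. -/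
noncomputable def upSMI {U V S T : Type*} [Fintype U] [Fintype V] [Fintype S] [Fintype T]
    (p : U → V → ℝ) (cU : U → S) (cV : V → T) : ℝ :=
  shEntropy (margU p) + shEntropy (margV p) - semJointEntropy p cU cV

/-- The semantic channel capacity `C_s = sup_p I^s(X̃;Ỹ)`, the supremum over all input pmfs
`p` of the up semantic mutual information computed from the joint distribution
`q(x,y) = p(x) W(y|x)`. -/
noncomputable def semCapacity {X Y S T : Type*} [Fintype X] [Fintype Y] [Fintype S] [Fintype T]
    (W : X → Y → ℝ) (cX : X → S) (cY : Y → T) : ℝ :=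
  sSup {r : ℝ | ∃ p : X → ℝ, (∀ x, 0 ≤ p x) ∧ (∑ x : X, p x = 1) ∧
      r = upSMI (fun x y => p x * W x y) cX cY}

/-!
Strong converse by the information-spectrum method. Fix `δ > 0` with `R = C_s + 2δ`. For a
codeword `x` of type (empirical distribution) `p` with output law `q = pW`, the probability
`W^n(D | x)` of a decoding set `D` is at most `2^{n(C_s+δ)} q^n(D)` plus the probability that
the information density `∑ₖ log₂ (W(yₖ|xₖ) / q(yₖ))` exceeds `n(C_s+δ)`. That density has mean
`n I(p;W) ≤ n I^s(p;W) ≤ n C_s`, because merging atoms into the classes `X_s × Y_t` can only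
lower the joint entropy; and since `q ≥ W / n` on the support, each summand is bounded by
`log₂ n - log₂ c`, with `c` the least positive transition probability, so by Chebyshev the
tail is `O(log² n / n)`. Messages of the same type share `q`, and the decoding sets are
disjoint, so the sum of `q^n(D_m)` over all messages is at most the number `(n+1)^|X|` of
types; dividing by `|M_n| ≥ 2^{n(C_s+2δ)}` leaves `(n+1)^|X| 2^{-nδ} → 0`.
-/

section ProductWeights

variable {ι Y : Type*} [Fintype ι] [DecidableEq ι] [Fintype Y] {w : ι → Y → ℝ}

theorem sum_prod_mul_prod (w g : ι → Y → ℝ) :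
    ∑ y : ι → Y, (∏ k, w k (y k)) * ∏ k, g k (y k) = ∏ k, ∑ b, w k b * g k b := by
  simp_rw [← prod_mul_distrib]
  exact (Fintype.prod_sum fun k b => w k b * g k b).symm

theorem sum_prod_eq_one (hw1 : ∀ k, ∑ b, w k b = 1) :
    ∑ y : ι → Y, ∏ k, w k (y k) = 1 := by
  rw [← Fintype.prod_sum, prod_congr rfl fun k _ => hw1 k, prod_const_one]

theorem sum_prod_mul_apply (hw1 : ∀ k, ∑ b, w k b = 1) (k : ι) (h : Y → ℝ) :
    ∑ y : ι → Y, (∏ l, w l (y l)) * h (y k) = ∑ b, w k b * h b := by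
  simpa [apply_ite, mul_ite, hw1] using sum_prod_mul_prod w fun l b => if l = k then h b else 1

theorem sum_prod_mul_apply_mul_apply (hw1 : ∀ k, ∑ b, w k b = 1) {k j : ι} (hkj : k ≠ j)
    (h g : Y → ℝ) :
    ∑ y : ι → Y, (∏ l, w l (y l)) * (h (y k) * g (y j))
      = (∑ b, w k b * h b) * ∑ b, w j b * g b := by
  have := sum_prod_mul_prod w fun l b => (if l = k then h b else 1) * (if l = j then g b else 1)
  simp only [prod_mul_distrib, prod_ite_eq', mem_univ, if_true] at this
  rw [this]
  calc _ = ∏ l, (if l = k then ∑ b, w k b * h b else 1)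
          * (if l = j then ∑ b, w j b * g b else 1) := by
        refine prod_congr rfl fun l _ => ?_
        by_cases hlk : l = k
        · subst hlk; simp [hkj]
        · by_cases hlj : l = j
          · subst hlj; simp [hlk]
          · simp [hlk, hlj, hw1]
    _ = _ := by rw [prod_mul_distrib, prod_ite_eq', prod_ite_eq']; simp

theorem sum_prod_mul_sum_sq (hw1 : ∀ k, ∑ b, w k b = 1) (d : ι → Y → ℝ)
    (hd : ∀ k, ∑ b, w k b * d k b = 0) :
    ∑ y : ι → Y, (∏ l, w l (y l)) * (∑ k, d k (y k)) ^ 2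
      = ∑ k, ∑ b, w k b * d k b ^ 2 := by
  calc _ = ∑ k, ∑ j, ∑ y : ι → Y, (∏ l, w l (y l)) * (d k (y k) * d j (y j)) := by
        simp_rw [sq, sum_mul_sum, mul_sum]
        rw [sum_comm]
        exact sum_congr rfl fun k _ => sum_comm
    _ = ∑ k, ∑ j, if k = j then ∑ b, w k b * d k b ^ 2 else 0 := by
        refine sum_congr rfl fun k _ => sum_congr rfl fun j _ => ?_
        split_ifs with hkj
        · subst hkj; simpa [sq] using sum_prod_mul_apply hw1 k fun b => d k b * d k b
        · rw [sum_prod_mul_apply_mul_apply hw1 hkj, hd, zero_mul]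
    _ = _ := by simp

theorem prod_meas_ge_le_variance_div_sq (hw0 : ∀ k b, 0 ≤ w k b) (hw1 : ∀ k, ∑ b, w k b = 1)
    (f : ι → Y → ℝ) {t : ℝ} (ht : 0 < t) :
    ∑ y : ι → Y with t ≤ |∑ k, (f k (y k) - ∑ b, w k b * f k b)|, ∏ k, w k (y k)
      ≤ (∑ k, ∑ b, w k b * (f k b - ∑ b', w k b' * f k b') ^ 2) / t ^ 2 := by
  set d : ι → Y → ℝ := fun k b => f k b - ∑ b', w k b' * f k b'
  have hd : ∀ k, ∑ b, w k b * d k b = 0 := fun k => by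
    simp only [d, mul_sub, sum_sub_distrib, ← sum_mul, hw1, one_mul, sub_self]
  have hμ : ∀ y : ι → Y, 0 ≤ ∏ k, w k (y k) := fun y => prod_nonneg fun k _ => hw0 k (y k)
  rw [← sum_prod_mul_sum_sq hw1 d hd, sum_div]
  calc _ ≤ ∑ y : ι → Y with t ≤ |∑ k, d k (y k)|,
          (∏ k, w k (y k)) * (∑ k, d k (y k)) ^ 2 / t ^ 2 := by
        refine sum_le_sum fun y hy => ?_
        have hsq : t ^ 2 ≤ (∑ k, d k (y k)) ^ 2 := by
          simpa [d, sum_sub_distrib] using pow_le_pow_left₀ ht.le (mem_filter.1 hy).2 2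
        rw [mul_div_assoc]
        exact le_mul_of_one_le_right (hμ y) ((one_le_div (by positivity)).2 hsq)
    _ ≤ _ := sum_le_sum_of_subset_of_nonneg (filter_subset _ _) fun y _ _ => by
        have := hμ y; positivity

end ProductWeights

theorem sum_mul_sub_sq_le_sum_mul_sq {Y : Type*} [Fintype Y] {w : Y → ℝ} (hw1 : ∑ b, w b = 1)
    (f : Y → ℝ) : ∑ b, w b * (f b - ∑ b', w b' * f b') ^ 2 ≤ ∑ b, w b * f b ^ 2 := by
  set E := ∑ b', w b' * f b'
  have : ∑ b, w b * (f b - E) ^ 2 = ∑ b, w b * f b ^ 2 - E ^ 2 := by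
    have hexpand : ∀ b,
        w b * (f b - E) ^ 2 = w b * f b ^ 2 - 2 * E * (w b * f b) + E ^ 2 * w b :=
      fun b => by ring
    simp only [hexpand, sum_add_distrib, sum_sub_distrib, ← mul_sum, hw1]
    ring
  rw [this]
  linarith [sq_nonneg E]

theorem lt_sum_logb_sub_logb_of_rpow_mul_prod_lt {ι : Type*} [Fintype ι] {u v : ι → ℝ}
    (hu : ∀ k, 0 ≤ u k) (hv0 : ∀ k, 0 ≤ v k) (hv : ∀ k, 0 < u k → 0 < v k) {γ : ℝ}
    (h : 2 ^ γ * ∏ k, v k < ∏ k, u k) :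
    γ < ∑ k, (Real.logb 2 (u k) - Real.logb 2 (v k)) := by
  have hupos : ∀ k, 0 < u k := fun k => (hu k).lt_of_ne fun hk => by
    have hzero : ∏ k, u k = 0 := prod_eq_zero (mem_univ k) hk.symm
    have hrhs : 0 ≤ 2 ^ γ * ∏ k, v k :=
      mul_nonneg (Real.rpow_nonneg zero_le_two γ) (prod_nonneg fun k _ => hv0 k)
    linarith
  have hvpos : ∀ k, 0 < v k := fun k => hv k (hupos k)
  have hlog := Real.logb_lt_logb one_lt_two
    (mul_pos (Real.rpow_pos_of_pos two_pos γ) (prod_pos fun k _ => hvpos k)) h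
  rw [Real.logb_mul (Real.rpow_pos_of_pos two_pos γ).ne' (prod_pos fun k _ => hvpos k).ne',
    Real.logb_rpow two_pos (by norm_num), Real.logb_prod _ _ fun k _ => (hvpos k).ne',
    Real.logb_prod _ _ fun k _ => (hupos k).ne'] at hlog
  rw [sum_sub_distrib]
  linarith

theorem sum_le_mul_sum_add_sum_filter_lt {α : Type*} [Fintype α] (D : Finset α)
    {μ ν : α → ℝ} (hμ : ∀ y, 0 ≤ μ y) (hν : ∀ y, 0 ≤ ν y) {Γ : ℝ}
    (hΓ : 0 ≤ Γ) :
    ∑ y ∈ D, μ y ≤ Γ * ∑ y ∈ D, ν y + ∑ y with Γ * ν y < μ y, μ y := by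
  rw [← sum_filter_not_add_sum_filter D fun y => Γ * ν y < μ y, mul_sum]
  gcongr
  · exact (sum_le_sum fun y hy => not_lt.1 (mem_filter.1 hy).2).trans
      (sum_le_sum_of_subset_of_nonneg (filter_subset _ _) fun y _ _ => mul_nonneg hΓ (hν y))
  · exact fun y _ _ => hμ y
  · exact subset_univ D

theorem sum_sum_filter_eq_le_card {M L Ω : Type*} [Fintype M] [DecidableEq M] [Fintype L]
    [Fintype Ω] (ν : L → Ω → ℝ) (hν0 : ∀ l ω, 0 ≤ ν l ω) (τ : M → L)
    (hν1 : ∀ m, ∑ ω, ν (τ m) ω = 1) (ψ : Ω → M) :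
    ∑ m, ∑ ω with ψ ω = m, ν (τ m) ω ≤ Fintype.card L := by
  rw [← Finset.sum_fiberwise univ τ]
  refine (sum_le_sum fun l _ => (?_ : _ ≤ (1 : ℝ))).trans (by simp)
  rcases (univ.filter (τ · = l)).eq_empty_or_nonempty with hempty | ⟨m₀, hm₀⟩
  · simp [hempty]
  calc ∑ m with τ m = l, ∑ ω with ψ ω = m, ν (τ m) ω
      = ∑ m with τ m = l, ∑ ω with ψ ω = m, ν l ω :=
        sum_congr rfl fun m hm => by rw [(mem_filter.1 hm).2]
    _ ≤ ∑ m, ∑ ω with ψ ω = m, ν l ω :=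
        sum_le_sum_of_subset_of_nonneg (subset_univ _) fun m _ _ =>
          sum_nonneg fun ω _ => hν0 l ω
    _ = 1 := by rw [Finset.sum_fiberwise univ ψ, ← (mem_filter.1 hm₀).2, hν1]

theorem exists_pos_le_of_pos {α : Type*} [Fintype α] (f : α → ℝ) :
    ∃ c, 0 < c ∧ ∀ i, 0 < f i → c ≤ f i := by
  by_cases h : ∃ i, 0 < f i
  · obtain ⟨i, hi⟩ := h
    obtain ⟨j, hj, hmin⟩ := (univ.filter fun i => 0 < f i).exists_min_image f
      ⟨i, mem_filter.2 ⟨mem_univ i, hi⟩⟩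
    exact ⟨f j, (mem_filter.1 hj).2, fun i hi => hmin i (mem_filter.2 ⟨mem_univ i, hi⟩)⟩
  · push Not at h
    exact ⟨1, one_pos, fun i hi => absurd hi (h i).not_gt⟩

theorem one_div_mul_sum_filter_ne_eq_one_sub {Ω : Type*} [Fintype Ω] {M : ℕ} (hM : M ≠ 0)
    (μ : Fin M → Ω → ℝ) (hμ : ∀ m, ∑ ω, μ m ω = 1) (ψ : Ω → Fin M) :
    1 / (M : ℝ) * ∑ m, ∑ ω with ψ ω ≠ m, μ m ω
      = 1 - 1 / (M : ℝ) * ∑ m, ∑ ω with ψ ω = m, μ m ω := by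
  have hsplit : ∀ m, ∑ ω with ψ ω ≠ m, μ m ω = 1 - ∑ ω with ψ ω = m, μ m ω := by
    intro m
    rw [← hμ m, ← sum_filter_add_sum_filter_not univ fun ω => ψ ω = m]
    ring
  simp only [hsplit, sum_sub_distrib, sum_const, card_univ, Fintype.card_fin, nsmul_eq_mul,
    mul_one, mul_sub]
  field_simp

section Entropy

variable {U V S T : Type*} [Fintype U] [Fintype V]

theorem shEntropy_le_card_div_log_two (p : U → ℝ) (hp : ∀ u, 0 ≤ p u) :
    shEntropy p ≤ Fintype.card U / Real.log 2 := by
  have hterm : ∀ u, -(p u * Real.logb 2 (p u)) = Real.negMulLog (p u) / Real.log 2 :=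
    fun u => by rw [Real.negMulLog, Real.logb]; ring
  rw [shEntropy, ← sum_neg_distrib, sum_congr rfl fun u _ => hterm u, ← sum_div]
  refine div_le_div_of_nonneg_right ?_ (Real.log_pos one_lt_two).le
  calc ∑ u, Real.negMulLog (p u) ≤ ∑ _u : U, (1 : ℝ) :=
        sum_le_sum fun u _ => (Real.negMulLog_le_one_sub_self (hp u)).trans (by linarith [hp u])
    _ = _ := by simp

theorem sum_mul_logb_le_sum_fiber [DecidableEq V] (q : U → ℝ) (hq : ∀ u, 0 ≤ q u)
    (c : U → V) :
    ∑ u, q u * Real.logb 2 (q u)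
      ≤ ∑ v, (∑ u with c u = v, q u) * Real.logb 2 (∑ u with c u = v, q u) := by
  have hfiber : ∀ v, (∑ u with c u = v, q u) * Real.logb 2 (∑ u with c u = v, q u)
      = ∑ u with c u = v, q u * Real.logb 2 (∑ u' with c u' = c u, q u') := fun v => by
    rw [sum_mul]
    exact sum_congr rfl fun u hu => by rw [(mem_filter.1 hu).2]
  rw [sum_congr rfl fun v _ => hfiber v, Finset.sum_fiberwise univ c]
  refine sum_le_sum fun u _ => ?_
  rcases (hq u).eq_or_lt with hu | hu
  · simp [← hu]
  have hle : q u ≤ ∑ u' with c u' = c u, q u' :=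
    single_le_sum (fun u' _ => hq u') (mem_filter.2 ⟨mem_univ u, rfl⟩)
  exact mul_le_mul_of_nonneg_left (Real.logb_le_logb_of_le one_lt_two hu hle) hu.le

theorem PjointClass_eq_sum_filter (q : U → V → ℝ) (cU : U → S) (cV : V → T)
    (s : S) (t : T) :
    PjointClass q cU cV s t = ∑ u : U × V with (cU u.1, cV u.2) = (s, t), q u.1 u.2 := by
  rw [PjointClass, sum_filter, Fintype.sum_prod_type]
  simp only [Prod.mk.injEq]

theorem semJointEntropy_eq_neg_sum_fiber [Fintype S] [Fintype T] (q : U → V → ℝ)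
    (cU : U → S) (cV : V → T) :
    semJointEntropy q cU cV = -∑ st : S × T,
      (∑ u : U × V with (cU u.1, cV u.2) = st, q u.1 u.2)
        * Real.logb 2 (∑ u : U × V with (cU u.1, cV u.2) = st, q u.1 u.2) := by
  rw [semJointEntropy, Fintype.sum_prod_type]
  simp only [PjointClass_eq_sum_filter]

theorem semJointEntropy_le_shJointEntropy [Fintype S] [Fintype T] (q : U → V → ℝ)
    (hq : ∀ u v, 0 ≤ q u v) (cU : U → S) (cV : V → T) :
    semJointEntropy q cU cV ≤ shJointEntropy q := by
  rw [semJointEntropy_eq_neg_sum_fiber, shJointEntropy, neg_le_neg_iff,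
    ← Fintype.sum_prod_type']
  exact sum_mul_logb_le_sum_fiber (fun u : U × V => q u.1 u.2) (fun u => hq u.1 u.2)
    fun u => (cU u.1, cV u.2)

theorem semJointEntropy_nonneg [Fintype S] [Fintype T] (q : U → V → ℝ)
    (hq0 : ∀ u v, 0 ≤ q u v) (hq1 : ∑ u, ∑ v, q u v = 1) (cU : U → S) (cV : V → T) :
    0 ≤ semJointEntropy q cU cV := by
  rw [semJointEntropy, neg_nonneg]
  refine sum_nonpos fun s _ => sum_nonpos fun t _ => ?_
  have hQ0 : 0 ≤ PjointClass q cU cV s t := by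
    rw [PjointClass_eq_sum_filter]; exact sum_nonneg fun u _ => hq0 u.1 u.2
  have hQ1 : PjointClass q cU cV s t ≤ 1 := by
    rw [PjointClass_eq_sum_filter, ← hq1, ← Fintype.sum_prod_type']
    exact sum_le_sum_of_subset_of_nonneg (filter_subset _ _)
      fun (u : U × V) _ _ => hq0 u.1 u.2
  exact mul_nonpos_of_nonneg_of_nonpos hQ0 (Real.logb_nonpos one_lt_two hQ0 hQ1)

theorem mutualInfo_le_upSMI [Fintype S] [Fintype T] (q : U → V → ℝ)
    (hq : ∀ u v, 0 ≤ q u v) (cU : U → S) (cV : V → T) :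
    mutualInfo q ≤ upSMI q cU cV := by
  rw [mutualInfo, upSMI]
  linarith [semJointEntropy_le_shJointEntropy q hq cU cV]

end Entropy

section Channel

variable {X Y : Type*} [Fintype X] {W : X → Y → ℝ} {p : X → ℝ}

noncomputable def outputDist (W : X → Y → ℝ) (p : X → ℝ) (b : Y) : ℝ :=
  ∑ a, p a * W a b

noncomputable def infoDensity (W : X → Y → ℝ) (p : X → ℝ) (a : X) (b : Y) : ℝ :=
  Real.logb 2 (W a b) - Real.logb 2 (outputDist W p b)

theorem sum_sum_mul_eq_sum [Fintype Y] (hW1 : ∀ a, ∑ b, W a b = 1) (p : X → ℝ) :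
    ∑ a, ∑ b, p a * W a b = ∑ a, p a := by
  simp only [← mul_sum, hW1, mul_one]

theorem outputDist_nonneg (hW0 : ∀ a b, 0 ≤ W a b) (hp : ∀ a, 0 ≤ p a) (b : Y) :
    0 ≤ outputDist W p b :=
  sum_nonneg fun a _ => mul_nonneg (hp a) (hW0 a b)

theorem mul_le_outputDist (hW0 : ∀ a b, 0 ≤ W a b) (hp : ∀ a, 0 ≤ p a) (a : X) (b : Y) :
    p a * W a b ≤ outputDist W p b :=
  single_le_sum (f := fun a => p a * W a b) (fun a _ => mul_nonneg (hp a) (hW0 a b)) (mem_univ a)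

theorem sum_outputDist [Fintype Y] (hW1 : ∀ a, ∑ b, W a b = 1) (hp1 : ∑ a, p a = 1) :
    ∑ b, outputDist W p b = 1 := by
  simp only [outputDist]
  rw [sum_comm, sum_sum_mul_eq_sum hW1, hp1]

theorem outputDist_le_one [Fintype Y] (hW0 : ∀ a b, 0 ≤ W a b) (hW1 : ∀ a, ∑ b, W a b = 1)
    (hp : ∀ a, 0 ≤ p a) (hp1 : ∑ a, p a = 1) (b : Y) : outputDist W p b ≤ 1 :=
  sum_outputDist hW1 hp1 ▸ single_le_sum (fun b _ => outputDist_nonneg hW0 hp b) (mem_univ b)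

theorem mutualInfo_eq_sum_infoDensity [Fintype Y] (hW1 : ∀ a, ∑ b, W a b = 1) (p : X → ℝ) :
    mutualInfo (fun a b => p a * W a b) = ∑ a, p a * ∑ b, W a b * infoDensity W p a b := by
  have hX : shEntropy (margU fun a b => p a * W a b)
      = -∑ a, ∑ b, p a * W a b * Real.logb 2 (p a) := by
    simp only [shEntropy, margU, ← mul_sum, hW1, mul_one, ← sum_mul]
  have hY : shEntropy (margV fun a b => p a * W a b)
      = -∑ a, ∑ b, p a * W a b * Real.logb 2 (outputDist W p b) := by
    rw [shEntropy, sum_comm]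
    simp only [margV, sum_mul, outputDist]
  have hXY : ∀ a b, p a * W a b * Real.logb 2 (p a * W a b)
      = p a * W a b * Real.logb 2 (p a) + p a * W a b * Real.logb 2 (W a b) := fun a b => by
    by_cases hpa : p a = 0
    · simp [hpa]
    by_cases hWab : W a b = 0
    · simp [hWab]
    rw [Real.logb_mul hpa hWab]; ring
  rw [mutualInfo, hX, hY, shJointEntropy]
  simp only [hXY, infoDensity, mul_sum, sum_add_distrib, mul_sub, sum_sub_distrib]
  ring_nf

end Channel

theorem mutualInfo_le_semCapacity {X Y S T : Type*} [Fintype X] [Fintype Y] [Fintype S]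
    [Fintype T] {W : X → Y → ℝ} (hW0 : ∀ a b, 0 ≤ W a b) (hW1 : ∀ a, ∑ b, W a b = 1)
    (cX : X → S) (cY : Y → T) {p : X → ℝ} (hp0 : ∀ a, 0 ≤ p a) (hp1 : ∑ a, p a = 1) :
    mutualInfo (fun a b => p a * W a b) ≤ semCapacity W cX cY := by
  have hq0 : ∀ a b, 0 ≤ p a * W a b := fun a b => mul_nonneg (hp0 a) (hW0 a b)
  refine (mutualInfo_le_upSMI _ hq0 cX cY).trans
    (le_csSup ⟨(Fintype.card X + Fintype.card Y) / Real.log 2, ?_⟩ ⟨p, hp0, hp1, rfl⟩)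
  rintro r ⟨p', hp'0, hp'1, rfl⟩
  have hq'0 : ∀ a b, 0 ≤ p' a * W a b := fun a b => mul_nonneg (hp'0 a) (hW0 a b)
  have hX := shEntropy_le_card_div_log_two (margU fun a b => p' a * W a b)
    fun a => sum_nonneg fun b _ => hq'0 a b
  have hY := shEntropy_le_card_div_log_two (margV fun a b => p' a * W a b)
    fun b => sum_nonneg fun a _ => hq'0 a b
  have hXY := semJointEntropy_nonneg _ hq'0 (by rw [sum_sum_mul_eq_sum hW1, hp'1]) cX cY
  rw [upSMI, add_div]
  linarith

section EmpiricalDistribution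

variable {n : ℕ} {X : Type*}

-- Valued in `Fin (n + 1)` so that the types of length `n` form a finite type.
noncomputable def typeCount (x : Fin n → X) (a : X) : Fin (n + 1) :=
  ⟨#{k | x k = a}, Nat.lt_succ_of_le ((card_filter_le _ _).trans (card_fin n).le)⟩

noncomputable def empiricalDist (x : Fin n → X) (a : X) : ℝ :=
  (typeCount x a : ℕ) / n

theorem empiricalDist_nonneg (x : Fin n → X) (a : X) : 0 ≤ empiricalDist x a := by
  unfold empiricalDist; positivity

theorem sum_comp_eq_mul_sum_empiricalDist [Fintype X] (hn : n ≠ 0) (x : Fin n → X)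
    (g : X → ℝ) :
    ∑ k, g (x k) = n * ∑ a, empiricalDist x a * g a := by
  rw [← Finset.sum_fiberwise' univ x g, mul_sum]
  refine sum_congr rfl fun a _ => ?_
  rw [sum_const, nsmul_eq_mul, empiricalDist, typeCount]
  field_simp

theorem sum_empiricalDist [Fintype X] (hn : n ≠ 0) (x : Fin n → X) :
    ∑ a, empiricalDist x a = 1 := by
  have := sum_comp_eq_mul_sum_empiricalDist hn x fun _ => 1
  simp only [sum_const, card_univ, Fintype.card_fin, nsmul_eq_mul, mul_one] at this
  exact (mul_eq_left₀ (Nat.cast_ne_zero.2 hn)).1 this.symm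

theorem inv_le_empiricalDist (x : Fin n → X) (k : Fin n) :
    (n : ℝ)⁻¹ ≤ empiricalDist x (x k) := by
  rw [empiricalDist, typeCount, inv_eq_one_div]
  gcongr
  exact Nat.one_le_cast.2 (card_pos.2 ⟨k, by simp⟩ : 0 < #{j | x j = x k})

end EmpiricalDistribution

section Codeword

variable {n : ℕ} {X Y : Type*} [Fintype X] {W : X → Y → ℝ}

theorem sq_infoDensity_empiricalDist_le [Fintype Y] (hW0 : ∀ a b, 0 ≤ W a b)
    (hW1 : ∀ a, ∑ b, W a b = 1) {c : ℝ} (hc : 0 < c)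
    (hcW : ∀ a b, 0 < W a b → c ≤ W a b) (hn : n ≠ 0) (x : Fin n → X) {k : Fin n} {b : Y}
    (hb : 0 < W (x k) b) :
    infoDensity W (empiricalDist x) (x k) b ^ 2 ≤ (Real.logb 2 n - Real.logb 2 c) ^ 2 := by
  set q := outputDist W (empiricalDist x) b
  have hn1 : (1 : ℝ) ≤ n := Nat.one_le_cast.2 (Nat.one_le_iff_ne_zero.2 hn)
  have hW_le : W (x k) b ≤ 1 := hW1 (x k) ▸ single_le_sum (fun b _ => hW0 (x k) b) (mem_univ b)
  have hq_ge : W (x k) b / n ≤ q := by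
    rw [div_eq_inv_mul]
    exact (mul_le_mul_of_nonneg_right (inv_le_empiricalDist x k) (hW0 _ _)).trans
      (mul_le_outputDist hW0 (empiricalDist_nonneg x) _ _)
  have hq_le : q ≤ 1 := outputDist_le_one hW0 hW1 (empiricalDist_nonneg x)
    (sum_empiricalDist hn x) b
  have hqpos : 0 < q := (div_pos hb (by positivity)).trans_le hq_ge
  have h1 : Real.logb 2 c ≤ Real.logb 2 (W (x k) b) :=
    Real.logb_le_logb_of_le one_lt_two hc (hcW _ _ hb)
  have h2 : Real.logb 2 (W (x k) b) - Real.logb 2 n ≤ Real.logb 2 q := by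
    rw [← Real.logb_div hb.ne' (by positivity)]
    exact Real.logb_le_logb_of_le one_lt_two (by positivity) hq_ge
  have h3 : Real.logb 2 q ≤ 0 := Real.logb_nonpos one_lt_two hqpos.le hq_le
  have h4 : Real.logb 2 c ≤ 0 := Real.logb_nonpos one_lt_two hc.le ((hcW _ _ hb).trans hW_le)
  have h5 : 0 ≤ Real.logb 2 n := Real.logb_nonneg one_lt_two hn1
  exact sq_le_sq' (by unfold infoDensity; linarith) (by unfold infoDensity; linarith)

theorem outputDist_empiricalDist_pos (hW0 : ∀ a b, 0 ≤ W a b) (hn : n ≠ 0) (x : Fin n → X)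
    {k : Fin n} {b : Y} (hb : 0 < W (x k) b) : 0 < outputDist W (empiricalDist x) b :=
  (mul_pos ((inv_pos.2 (Nat.cast_pos.2 (Nat.pos_of_ne_zero hn))).trans_le
    (inv_le_empiricalDist x k)) hb).trans_le
    (mul_le_outputDist hW0 (empiricalDist_nonneg x) _ _)

theorem sum_mul_sq_infoDensity_empiricalDist_le [Fintype Y] (hW0 : ∀ a b, 0 ≤ W a b)
    (hW1 : ∀ a, ∑ b, W a b = 1) {c : ℝ} (hc : 0 < c)
    (hcW : ∀ a b, 0 < W a b → c ≤ W a b) (hn : n ≠ 0) (x : Fin n → X) (k : Fin n) :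
    ∑ b, W (x k) b * infoDensity W (empiricalDist x) (x k) b ^ 2
      ≤ (Real.logb 2 n - Real.logb 2 c) ^ 2 := by
  calc _ ≤ ∑ b, W (x k) b * (Real.logb 2 n - Real.logb 2 c) ^ 2 := by
        refine sum_le_sum fun b _ => ?_
        rcases (hW0 (x k) b).eq_or_lt with hb | hb
        · simp [← hb]
        · exact mul_le_mul_of_nonneg_left
            (sq_infoDensity_empiricalDist_le hW0 hW1 hc hcW hn x hb) hb.le
    _ = _ := by rw [← sum_mul, hW1, one_mul]

theorem infoDensity_tail_le [Fintype Y] (hW0 : ∀ a b, 0 ≤ W a b) (hW1 : ∀ a, ∑ b, W a b = 1)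
    {c : ℝ} (hc : 0 < c) (hcW : ∀ a b, 0 < W a b → c ≤ W a b) (hn : n ≠ 0)
    (x : Fin n → X) {δ : ℝ} (hδ : 0 < δ) :
    ∑ y : Fin n → Y with
        2 ^ (n * (mutualInfo (fun a b => empiricalDist x a * W a b) + δ))
          * ∏ k, outputDist W (empiricalDist x) (y k) < ∏ k, W (x k) (y k),
      ∏ k, W (x k) (y k)
      ≤ (Real.logb 2 n - Real.logb 2 c) ^ 2 / (n * δ ^ 2) := by
  set p := empiricalDist x
  set f : Fin n → Y → ℝ := fun k b => infoDensity W p (x k) b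
  have hnR : (0 : ℝ) < n := Nat.cast_pos.2 (Nat.pos_of_ne_zero hn)
  have hmean : ∑ k, ∑ b, W (x k) b * f k b = n * mutualInfo (fun a b => p a * W a b) := by
    rw [sum_comp_eq_mul_sum_empiricalDist hn x fun a => ∑ b, W a b * infoDensity W p a b,
      mutualInfo_eq_sum_infoDensity hW1]
  have hsub : univ.filter (fun y : Fin n → Y =>
        2 ^ (n * (mutualInfo (fun a b => p a * W a b) + δ)) * ∏ k, outputDist W p (y k)
          < ∏ k, W (x k) (y k))
      ⊆ univ.filter fun y => n * δ ≤ |∑ k, (f k (y k) - ∑ b, W (x k) b * f k b)| := by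
    intro y hy
    rw [mem_filter] at hy ⊢
    refine ⟨mem_univ y, le_abs.2 (Or.inl ?_)⟩
    have := lt_sum_logb_sub_logb_of_rpow_mul_prod_lt (fun k => hW0 _ _)
      (fun k => outputDist_nonneg hW0 (empiricalDist_nonneg x) _)
      (fun k hk => outputDist_empiricalDist_pos hW0 hn x hk) hy.2
    rw [sum_sub_distrib, hmean]
    simp only [f, infoDensity]
    linarith
  calc _ ≤ ∑ y : Fin n → Y with n * δ ≤ |∑ k, (f k (y k) - ∑ b, W (x k) b * f k b)|,
          ∏ k, W (x k) (y k) :=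
        sum_le_sum_of_subset_of_nonneg hsub fun y _ _ => prod_nonneg fun k _ => hW0 _ _
    _ ≤ (∑ k, ∑ b, W (x k) b * (f k b - ∑ b', W (x k) b' * f k b') ^ 2) / (n * δ) ^ 2 :=
        prod_meas_ge_le_variance_div_sq (w := fun k b => W (x k) b) (fun k b => hW0 _ _)
          (fun k => hW1 _) f (by positivity)
    _ ≤ (∑ _k : Fin n, (Real.logb 2 n - Real.logb 2 c) ^ 2) / (n * δ) ^ 2 := by
        gcongr with k
        exact (sum_mul_sub_sq_le_sum_mul_sq (hW1 _) _).trans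
          (sum_mul_sq_infoDensity_empiricalDist_le hW0 hW1 hc hcW hn x k)
    _ = _ := by
        rw [sum_const, card_univ, Fintype.card_fin, nsmul_eq_mul]
        field_simp

theorem sum_prod_le_rpow_semCapacity_mul_add {S T : Type*} [Fintype Y] [Fintype S]
    [Fintype T] (hW0 : ∀ a b, 0 ≤ W a b) (hW1 : ∀ a, ∑ b, W a b = 1)
    (cX : X → S) (cY : Y → T) {c : ℝ} (hc : 0 < c) (hcW : ∀ a b, 0 < W a b → c ≤ W a b)
    (hn : n ≠ 0) (x : Fin n → X) {δ : ℝ} (hδ : 0 < δ) (D : Finset (Fin n → Y)) :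
    ∑ y ∈ D, ∏ k, W (x k) (y k)
      ≤ 2 ^ (n * (semCapacity W cX cY + δ))
          * ∑ y ∈ D, ∏ k, outputDist W (empiricalDist x) (y k)
        + (Real.logb 2 n - Real.logb 2 c) ^ 2 / (n * δ ^ 2) := by
  have hq0 : ∀ y : Fin n → Y, 0 ≤ ∏ k, outputDist W (empiricalDist x) (y k) :=
    fun y => prod_nonneg fun k _ => outputDist_nonneg hW0 (empiricalDist_nonneg x) _
  have hΓ : (2 : ℝ) ^ (n * (mutualInfo (fun a b => empiricalDist x a * W a b) + δ))
      ≤ 2 ^ (n * (semCapacity W cX cY + δ)) := by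
    gcongr
    · norm_num
    · exact mutualInfo_le_semCapacity hW0 hW1 cX cY (empiricalDist_nonneg x)
        (sum_empiricalDist hn x)
  refine (sum_le_mul_sum_add_sum_filter_lt D (fun y => prod_nonneg fun k _ => hW0 _ _) hq0
    (Γ := 2 ^ (n * (semCapacity W cX cY + δ))) (by positivity)).trans (add_le_add le_rfl ?_)
  refine le_trans (sum_le_sum_of_subset_of_nonneg (fun y hy => ?_)
    fun y _ _ => prod_nonneg fun k _ => hW0 _ _) (infoDensity_tail_le hW0 hW1 hc hcW hn x hδ)
  rw [mem_filter] at hy ⊢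
  exact ⟨mem_univ y, (mul_le_mul_of_nonneg_right hΓ (hq0 y)).trans_lt hy.2⟩

theorem average_correct_le {S T : Type*} [Fintype Y] [Fintype S] [Fintype T]
    (hW0 : ∀ a b, 0 ≤ W a b) (hW1 : ∀ a, ∑ b, W a b = 1)
    (cX : X → S) (cY : Y → T) {c : ℝ} (hc : 0 < c) (hcW : ∀ a b, 0 < W a b → c ≤ W a b)
    (hn : n ≠ 0) {δ : ℝ} (hδ : 0 < δ) {M : ℕ}
    (hM : 2 ^ (n * (semCapacity W cX cY + 2 * δ)) ≤ (M : ℝ))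
    (φ : Fin M → Fin n → X) (ψ : (Fin n → Y) → Fin M) :
    1 / (M : ℝ) * ∑ m, ∑ y with ψ y = m, ∏ k, W (φ m k) (y k)
      ≤ ((n : ℝ) + 1) ^ Fintype.card X * ((2 : ℝ) ^ (-δ)) ^ n
        + (Real.logb 2 n - Real.logb 2 c) ^ 2 / (n * δ ^ 2) := by
  set Γ : ℝ := 2 ^ (n * (semCapacity W cX cY + δ))
  set B : ℝ := (Real.logb 2 n - Real.logb 2 c) ^ 2 / (n * δ ^ 2)
  have hMpos : 0 < (M : ℝ) := (Real.rpow_pos_of_pos two_pos _).trans_le hM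
  have htypes : ∑ m, ∑ y with ψ y = m, ∏ k, outputDist W (empiricalDist (φ m)) (y k)
      ≤ ((n : ℝ) + 1) ^ Fintype.card X := by
    have := sum_sum_filter_eq_le_card
      (fun (t : X → Fin (n + 1)) (y : Fin n → Y) =>
        ∏ k, outputDist W (fun a => ((t a : ℕ) : ℝ) / n) (y k))
      (fun t y => prod_nonneg fun k _ => outputDist_nonneg hW0 (fun a => by positivity) _)
      (fun m => typeCount (φ m))
      (fun m => sum_prod_eq_one fun k => sum_outputDist hW1 (sum_empiricalDist hn (φ m))) ψ
    refine this.trans_eq ?_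
    simp
  have hcorrect : ∑ m, ∑ y with ψ y = m, ∏ k, W (φ m k) (y k)
      ≤ Γ * ((n : ℝ) + 1) ^ Fintype.card X + M * B :=
    calc _ ≤ ∑ m, (Γ * ∑ y with ψ y = m, ∏ k, outputDist W (empiricalDist (φ m)) (y k)
            + B) :=
          sum_le_sum fun m _ =>
            sum_prod_le_rpow_semCapacity_mul_add hW0 hW1 cX cY hc hcW hn (φ m) hδ _
      _ ≤ _ := by
          rw [sum_add_distrib, ← mul_sum, sum_const, card_univ, Fintype.card_fin, nsmul_eq_mul]
          gcongr
  have hΓM : Γ / M ≤ ((2 : ℝ) ^ (-δ)) ^ n := by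
    calc Γ / M ≤ Γ / 2 ^ (n * (semCapacity W cX cY + 2 * δ)) := by gcongr
      _ = ((2 : ℝ) ^ (-δ)) ^ n := by
          rw [← Real.rpow_sub two_pos, ← Real.rpow_natCast, ← Real.rpow_mul zero_le_two]
          ring_nf
  calc _ ≤ 1 / (M : ℝ) * (Γ * ((n : ℝ) + 1) ^ Fintype.card X + M * B) := by gcongr
    _ = Γ / M * ((n : ℝ) + 1) ^ Fintype.card X + B := by field_simp
    _ ≤ _ := by rw [mul_comm]; gcongr

end Codeword

theorem tendsto_add_one_pow_mul_rpow_neg_pow {δ : ℝ} (hδ : 0 < δ) (d : ℕ) :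
    Filter.Tendsto (fun n : ℕ => ((n : ℝ) + 1) ^ d * ((2 : ℝ) ^ (-δ)) ^ n)
      Filter.atTop (nhds 0) := by
  set r : ℝ := 2 ^ (-δ)
  have hr : 0 < r := Real.rpow_pos_of_pos two_pos _
  have hr1 : |r| < 1 := by
    rw [abs_of_pos hr]; exact Real.rpow_lt_one_of_one_lt_of_neg one_lt_two (neg_neg_of_pos hδ)
  have := ((tendsto_pow_const_mul_const_pow_of_abs_lt_one d hr1).comp
    (Filter.tendsto_add_atTop_nat 1)).const_mul r⁻¹
  rw [mul_zero] at this
  refine this.congr fun n => ?_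
  simp only [Function.comp, Nat.cast_add, Nat.cast_one, pow_succ]
  field_simp

theorem tendsto_sq_logb_sub_div (a δ : ℝ) :
    Filter.Tendsto (fun n : ℕ => (Real.logb 2 n - a) ^ 2 / (n * δ ^ 2))
      Filter.atTop (nhds 0) := by
  have hlog : ∀ k : ℕ,
      Filter.Tendsto (fun x : ℝ => Real.log x ^ k / x) Filter.atTop (nhds 0) :=
    fun k => by simpa using Real.tendsto_pow_log_div_mul_add_atTop 1 0 k one_ne_zero
  have := ((((hlog 2).const_mul ((Real.log 2)⁻¹ ^ 2)).sub
    ((hlog 1).const_mul (2 * a * (Real.log 2)⁻¹))).add ((hlog 0).const_mul (a ^ 2))).const_mul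
    (δ ^ 2)⁻¹
  simp only [mul_zero, sub_zero, add_zero] at this
  refine (this.comp tendsto_natCast_atTop_atTop).congr fun n => ?_
  simp only [Function.comp, Real.logb]
  ring

theorem semantic_channel_coding_converse_general
    {X Y S T : Type*} [Fintype X] [Fintype Y] [Fintype S] [Fintype T]
    (W : X → Y → ℝ) (hW0 : ∀ x y, 0 ≤ W x y) (hW1 : ∀ x, ∑ y : Y, W x y = 1)
    (cX : X → S)
    (cY : Y → T)
    (R : ℝ) (hR : semCapacity W cX cY < R)
    (m : ℕ → ℕ) (hm : ∀ n : ℕ, 2 ^ ((n : ℝ) * R) ≤ (m n : ℝ))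
    (φ : ∀ n, Fin (m n) → Fin n → X) (ψ : ∀ n, (Fin n → Y) → Fin (m n)) :
    Filter.Tendsto
      (fun n : ℕ =>
        (1 / (m n : ℝ)) * ∑ msg : Fin (m n),
          ∑ y ∈ Finset.univ.filter (fun y : Fin n → Y => ψ n y ≠ msg),
            ∏ k : Fin n, W (φ n msg k) (y k))
      Filter.atTop (nhds 1) := by
  obtain ⟨c, hc, hcW⟩ := exists_pos_le_of_pos fun ab : X × Y => W ab.1 ab.2
  obtain ⟨δ, hδ, hRδ⟩ : ∃ δ, 0 < δ ∧ semCapacity W cX cY + 2 * δ = R :=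
    ⟨(R - semCapacity W cX cY) / 2, by linarith, by ring⟩
  have hm0 : ∀ n, m n ≠ 0 := fun n =>
    Nat.cast_ne_zero.1 ((Real.rpow_pos_of_pos two_pos _).trans_le (hm n)).ne'
  have hbound := (tendsto_add_one_pow_mul_rpow_neg_pow hδ (Fintype.card X)).add
    (tendsto_sq_logb_sub_div (Real.logb 2 c) δ)
  rw [add_zero] at hbound
  have hcorrect : Filter.Tendsto (fun n => 1 / (m n : ℝ) * ∑ msg : Fin (m n),
      ∑ y with ψ n y = msg, ∏ k, W (φ n msg k) (y k)) Filter.atTop (nhds 0) :=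
    squeeze_zero' (Filter.Eventually.of_forall fun n => mul_nonneg (by positivity)
        (sum_nonneg fun _ _ => sum_nonneg fun _ _ => prod_nonneg fun _ _ => hW0 _ _))
      (Filter.eventually_atTop.2 ⟨1, fun n hn => average_correct_le hW0 hW1 cX cY hc
        (fun a b => hcW (a, b)) (Nat.one_le_iff_ne_zero.1 hn) hδ (hRδ ▸ hm n) (φ n) (ψ n)⟩)
      hbound
  simpa only [one_div_mul_sum_filter_ne_eq_one_sub (hm0 _) _
    (fun msg => sum_prod_eq_one fun k => hW1 _), sub_zero] using hcorrect.const_sub 1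

/-- Semantic channel coding theorem, converse part: Let `W` be a discrete
memoryless channel from a finite set `X` to a finite set `Y`, with partitions of `X` and `Y`
encoded by surjective class-index maps `cX`, `cY`, and semantic capacity
`C_s = sup_p I^s(X̃;Ỹ)`.  If `R > C_s`, then for any sequence of codes with message sets
`Fin (m n)`, `m n ≥ 2^{nR}`, encoders `φ n : Fin (m n) → X^n` and decoders
`ψ n : Y^n → Fin (m n)`, the average error probability
`(1/(m n)) Σ_{msg} Pr(ψ_n(Y^n) ≠ msg | X^n = φ_n(msg))` tends to `1` as `n → ∞`,
where `Pr(Y^n = y^n | X^n = x^n) = Π_k W(y_k|x_k)`. -/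
theorem semantic_channel_coding_converse
    {X Y S T : Type*} [Fintype X] [Fintype Y] [Fintype S] [Fintype T]
    (W : X → Y → ℝ) (hW0 : ∀ x y, 0 ≤ W x y) (hW1 : ∀ x, ∑ y : Y, W x y = 1)
    (cX : X → S) (hcX : Function.Surjective cX)
    (cY : Y → T) (hcY : Function.Surjective cY)
    (R : ℝ) (hR : semCapacity W cX cY < R)
    (m : ℕ → ℕ) (hm : ∀ n : ℕ, 2 ^ ((n : ℝ) * R) ≤ (m n : ℝ))
    (φ : ∀ n, Fin (m n) → Fin n → X) (ψ : ∀ n, (Fin n → Y) → Fin (m n)) :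
    Filter.Tendsto
      (fun n : ℕ =>
        (1 / (m n : ℝ)) * ∑ msg : Fin (m n),
          ∑ y ∈ Finset.univ.filter (fun y : Fin n → Y => ψ n y ≠ msg),
            ∏ k : Fin n, W (φ n msg k) (y k))
      Filter.atTop (nhds 1) :=
  semantic_channel_coding_converse_general W hW0 hW1 cX cY R hR m hm φ ψ
end
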